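/- arXiv:2311.11433 — 3 statements merged into one kernel-verified Lean document; each statement's English description precedes it below -/
import Mathlib

section
/- Fix d ≥ 1. As formal power series in q (over the integers), ∑_{n ≥ 1} f(n,d) q^n = q^{d²} / ((q;q)_{d-1} (q;q)_d), where (q;q)_k = (1-q)(1-q²)⋯(1-q^k) and (q;q)_0 = 1. Equivalently, (q;q)_{d-1} (q;q)_d · ∑_{n ≥ 1} f(n,d) q^n = q^{d²}. -/
/-- The `d`-th largest part of a partition (1-indexed); `0` if the index is out of range. -/
def nthPart {n : ℕ} (p : n.Partition) (d : ℕ) : ℕ :=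
  (p.parts.sort (· ≥ ·)).getD (d - 1) 0

/-- `f n d` is the number of partitions of `n` with fixed point `d`,
i.e. whose `d`-th largest part equals `d`. -/
noncomputable def f (n d : ℕ) : ℕ :=
  Nat.card {p : n.Partition // nthPart p d = d}
/-- The Pochhammer symbol `(q;q)_k = (1-q)(1-q²)⋯(1-q^k)` as a power series over ℤ. -/
noncomputable def qPoch (k : ℕ) : PowerSeries ℤ :=
  ∏ i ∈ Finset.range k, (1 - (PowerSeries.X : PowerSeries ℤ) ^ (i + 1))

/-!
A partition with `λ_d = d` splits into the `d × d` square, the arm to its right and the leg below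
it. The arm, obtained by subtracting `d` from the `c < d` parts exceeding `d`, is a partition into
at most `d - 1` parts; the leg, the parts left once `d - c` parts equal to `d` are removed, is a
partition into parts at most `d`. So the generating function is `q^{d²} / ((q;q)_{d-1} (q;q)_d)`,
both factors coming from the recurrence that splits off `1 / (1 - q^k)`: remove a part `k`,
respectively subtract `1` from each of exactly `k` parts.
-/

open Multiset PowerSeries

lemma PowerSeries.one_sub_X_pow_mul_mk {R : Type*} [CommRing R] {k : ℕ} {g g' : ℕ → R}
    (h : ∀ n, g n = g' n + if k ≤ n then g (n - k) else 0) :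
    (1 - X ^ k) * mk g = mk g' := by
  ext n
  rw [sub_mul, one_mul, map_sub, coeff_X_pow_mul', coeff_mk, coeff_mk, h n]
  split_ifs <;> simp [coeff_mk]

lemma qPoch_mul_mk_eq_one {c : ℕ → ℕ → ℕ} (h0 : ∀ n, c 0 n = if n = 0 then 1 else 0)
    (hsucc : ∀ k n, c (k + 1) n = c k n + if k + 1 ≤ n then c (k + 1) (n - (k + 1)) else 0)
    (k : ℕ) : qPoch k * mk (fun n => (c k n : ℤ)) = 1 := by
  induction k with
  | zero =>
    ext n
    simp [qPoch, h0, coeff_one]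
  | succ k ih =>
    rw [qPoch, Finset.prod_range_succ, ← qPoch, mul_assoc,
      one_sub_X_pow_mul_mk (g' := fun n => (c k n : ℤ)) fun n => by
        rw [hsucc]; split_ifs <;> push_cast <;> rfl, ih]

lemma Nat.card_subtype_eq_card_and_add_card_and_not {α : Type*} [Finite α] (P Q : α → Prop) :
    Nat.card {x // P x} = Nat.card {x // P x ∧ Q x} + Nat.card {x // P x ∧ ¬ Q x} := by
  classical
  rw [← Nat.card_congr (Equiv.subtypeSubtypeEquivSubtypeInter P Q),
    ← Nat.card_congr (Equiv.subtypeSubtypeEquivSubtypeInter P (¬ Q ·)), ← Nat.card_sum,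
    Nat.card_congr (Equiv.sumCompl _)]

lemma Nat.Partition.card_subtype_parts_eq_zero (n : ℕ) :
    Nat.card {p : n.Partition // p.parts = 0} = if n = 0 then 1 else 0 := by
  split_ifs with hn
  · subst hn
    simp
  · rw [Nat.card_eq_zero]
    refine Or.inl ⟨fun ⟨p, hp⟩ => hn ?_⟩
    simpa [hp] using p.parts_sum.symm

abbrev PartsLE (k n : ℕ) : Type := {p : n.Partition // ∀ x ∈ p.parts, x ≤ k}

abbrev LengthLE (k n : ℕ) : Type := {p : n.Partition // card p.parts ≤ k}

lemma card_partsLE_zero (n : ℕ) : Nat.card (PartsLE 0 n) = if n = 0 then 1 else 0 := by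
  rw [← Nat.Partition.card_subtype_parts_eq_zero]
  refine Nat.card_congr (Equiv.subtypeEquivRight fun p => ?_)
  refine ⟨fun h => eq_zero_of_forall_notMem fun x hx => ?_, fun h x hx => by simp [h] at hx⟩
  have := p.parts_pos hx
  have := h x hx
  omega

lemma card_lengthLE_zero (n : ℕ) : Nat.card (LengthLE 0 n) = if n = 0 then 1 else 0 := by
  rw [← Nat.Partition.card_subtype_parts_eq_zero]
  exact Nat.card_congr (Equiv.subtypeEquivRight fun p => by simp)

lemma card_partsLE_succ (k n : ℕ) :
    Nat.card (PartsLE (k + 1) n) =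
      Nat.card (PartsLE k n) +
        if k + 1 ≤ n then Nat.card (PartsLE (k + 1) (n - (k + 1))) else 0 := by
  rw [PartsLE, Nat.card_subtype_eq_card_and_add_card_and_not _ (k + 1 ∉ ·.parts)]
  congr 1
  · refine Nat.card_congr (Equiv.subtypeEquivRight fun p => ?_)
    refine ⟨fun ⟨hle, hk⟩ x hx => ?_,
      fun h => ⟨fun x hx => (h x hx).trans k.le_succ, fun hk => ?_⟩⟩
    · have := hle x hx
      have : x ≠ k + 1 := by rintro rfl; exact hk hx
      omega
    · exact absurd (h _ hk) (by omega)
  simp_rw [not_not]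
  split_ifs with hkn
  · refine Nat.card_congr ((Equiv.subtypeEquivRight fun _ => and_comm).trans
      ((Equiv.subtypeSubtypeEquivSubtypeInter
        (k + 1 ∈ ·.parts : n.Partition → Prop) _).symm.trans
        ((Nat.Partition.partitionWithPartEquiv k.succ_pos hkn).subtypeEquiv fun p => ?_)))
    rw [Nat.Partition.partitionWithPartEquiv_apply_parts]
    conv_lhs => rw [← cons_erase p.2]
    simp
  · rw [Nat.card_eq_zero]
    exact Or.inl ⟨fun ⟨p, _, hp⟩ => hkn (Nat.Partition.le_of_mem_parts hp)⟩

/-- Adds `d` to every entry of `s` padded with zeros to length `k`; thus `shiftPad d d μ` is the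
`d × d` square with the arm `μ` attached. -/
def shiftPad (d k : ℕ) (s : Multiset ℕ) : Multiset ℕ :=
  s.map (· + d) + replicate (k - card s) d

def unshift (d : ℕ) (s : Multiset ℕ) : Multiset ℕ :=
  (s.filter (d < ·)).map (· - d)

section ShiftPad

variable {d k : ℕ} {s t : Multiset ℕ}

lemma card_shiftPad (h : card s ≤ k) : card (shiftPad d k s) = k := by
  simp [shiftPad]
  omega

lemma sum_shiftPad (h : card s ≤ k) : (shiftPad d k s).sum = s.sum + k * d := by
  simp only [shiftPad, sum_add, sum_map_add, map_id', map_const', sum_replicate, smul_eq_mul]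
  rw [add_assoc, ← add_mul, Nat.add_sub_cancel' h]

lemma le_of_mem_shiftPad {x : ℕ} (hx : x ∈ shiftPad d k s) : d ≤ x := by
  rcases mem_add.1 hx with hx | hx
  · obtain ⟨y, -, rfl⟩ := mem_map.1 hx
    omega
  · rw [eq_of_mem_replicate hx]

lemma filter_lt_shiftPad_add (hs : ∀ x ∈ s, 0 < x) (ht : ∀ x ∈ t, x ≤ d) :
    (shiftPad d k s + t).filter (d < ·) = s.map (· + d) := by
  rw [shiftPad, filter_add, filter_add, filter_eq_self.2, filter_eq_nil.2, filter_eq_nil.2,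
    add_zero, add_zero]
  · exact fun x hx => by simpa using ht x hx
  · exact fun x hx => by simp [eq_of_mem_replicate hx]
  · intro x hx
    obtain ⟨y, hy, rfl⟩ := mem_map.1 hx
    have := hs y hy
    omega

lemma unshift_shiftPad_add (hs : ∀ x ∈ s, 0 < x) (ht : ∀ x ∈ t, x ≤ d) :
    unshift d (shiftPad d k s + t) = s := by
  simp [unshift, filter_lt_shiftPad_add hs ht, map_map]

lemma pos_of_mem_unshift {x : ℕ} (hx : x ∈ unshift d s) : 0 < x := by
  obtain ⟨y, hy, rfl⟩ := mem_map.1 hx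
  have := of_mem_filter hy
  omega

lemma card_unshift : card (unshift d s) = card (s.filter (d < ·)) :=
  card_map _ _

lemma card_filter_le_eq_card_filter_lt_add_count (d : ℕ) (s : Multiset ℕ) :
    card (s.filter (d ≤ ·)) = card (s.filter (d < ·)) + count d s := by
  induction s using Multiset.induction_on with
  | empty => simp
  | cons a s ih =>
    simp only [filter_cons, count_cons, card_add, ih]
    split_ifs <;> simp <;> omega

lemma shiftPad_unshift (d k : ℕ) (s : Multiset ℕ) :
    shiftPad d k (unshift d s) =
      s.filter (d < ·) + replicate (k - card (s.filter (d < ·))) d := by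
  rw [shiftPad, unshift, map_map, card_map]
  congr 1
  conv_rhs => rw [← map_id (s.filter (d < ·))]
  exact map_congr rfl fun x hx => by have := of_mem_filter hx; simp; omega

lemma shiftPad_unshift_le (h : k - card (s.filter (d < ·)) ≤ count d s) :
    shiftPad d k (unshift d s) ≤ s := by
  rw [shiftPad_unshift]
  conv_rhs => rw [← filter_add_not (d < ·) s]
  refine add_le_add_right ((le_count_iff_replicate_le (a := d)).1 ?_) _
  rwa [count_filter_of_pos (p := fun a => ¬ d < a) (lt_irrefl d)]

lemma le_of_mem_sub_shiftPad_unshift {x : ℕ} (hx : x ∈ s - shiftPad d k (unshift d s)) :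
    x ≤ d := by
  by_contra! hdx
  rw [← count_pos, count_sub, shiftPad_unshift, count_add, count_filter_of_pos hdx,
    count_replicate, if_neg hdx.ne] at hx
  omega

end ShiftPad

lemma card_partitions_length_eq_add (k m : ℕ) :
    Nat.card {p : (m + k).Partition // card p.parts = k} = Nat.card (LengthLE k m) := by
  symm
  refine Nat.card_congr (Equiv.ofBijective
    (fun q => ⟨⟨shiftPad 1 k q.1.parts, fun hx => (le_of_mem_shiftPad hx : 1 ≤ _),
      by rw [sum_shiftPad q.2, q.1.parts_sum, mul_one]⟩, card_shiftPad q.2⟩) ⟨?_, ?_⟩)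
  · intro q q' h
    have := congrArg (fun p => unshift 1 (p.1.parts + 0)) h
    dsimp only at this
    rw [unshift_shiftPad_add (fun _ => q.1.parts_pos) (by simp),
      unshift_shiftPad_add (fun _ => q'.1.parts_pos) (by simp)] at this
    exact Subtype.ext (Nat.Partition.ext this)
  · rintro ⟨p, hp⟩
    have hall : p.parts.filter (1 ≤ ·) = p.parts := filter_eq_self.2 fun x hx => p.parts_pos hx
    have hcount := card_filter_le_eq_card_filter_lt_add_count 1 p.parts
    rw [hall, hp] at hcount
    have hlen : card (unshift 1 p.parts) ≤ k := by rw [card_unshift]; omega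
    have hshift : shiftPad 1 k (unshift 1 p.parts) = p.parts :=
      eq_of_le_of_card_le (shiftPad_unshift_le (by omega)) (by rw [card_shiftPad hlen, hp])
    have hsum := sum_shiftPad (d := 1) hlen
    rw [hshift, p.parts_sum] at hsum
    exact ⟨⟨⟨unshift 1 p.parts, pos_of_mem_unshift, by omega⟩, hlen⟩,
      Subtype.ext (Nat.Partition.ext hshift)⟩

lemma card_lengthLE_succ (k n : ℕ) :
    Nat.card (LengthLE (k + 1) n) =
      Nat.card (LengthLE k n) +
        if k + 1 ≤ n then Nat.card (LengthLE (k + 1) (n - (k + 1))) else 0 := by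
  rw [LengthLE, Nat.card_subtype_eq_card_and_add_card_and_not _ (card ·.parts ≤ k)]
  congr 1
  · exact Nat.card_congr (Equiv.subtypeEquivRight fun p => by omega)
  rw [Nat.card_congr (Equiv.subtypeEquivRight fun p => show _ ↔ card p.parts = k + 1 by omega)]
  split_ifs with hkn
  · obtain ⟨m, rfl⟩ := Nat.exists_eq_add_of_le' hkn
    rw [card_partitions_length_eq_add, Nat.add_sub_cancel]
  · rw [Nat.card_eq_zero]
    refine Or.inl ⟨fun ⟨p, hp⟩ => hkn ?_⟩
    simpa [← hp, p.parts_sum] using card_nsmul_le_sum fun x hx => (p.parts_pos hx : 1 ≤ x)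

lemma List.le_getD_iff_lt_length_filter {t : ℕ} (ht : 1 ≤ t) :
    ∀ {l : List ℕ}, l.Pairwise (· ≥ ·) → ∀ j,
      (t ≤ l.getD j 0 ↔ j < (l.filter (t ≤ ·)).length)
  | [], _, j => by simp; omega
  | a :: l, hl, j => by
    have hle : ∀ x ∈ l, x ≤ a := fun x hx => List.rel_of_pairwise_cons hl hx
    by_cases hta : t ≤ a
    · cases j with
      | zero => simp [hta]
      | succ j =>
        rw [List.getD_cons_succ, List.le_getD_iff_lt_length_filter ht hl.of_cons j]
        simp [hta]
    · have hnil : (a :: l).filter (t ≤ ·) = [] :=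
        List.filter_eq_nil_iff.2 fun x hx => by
          rcases List.mem_cons.1 hx with rfl | hx
          · simpa using hta
          · simpa using fun h : t ≤ x => hta (h.trans (hle x hx))
      rw [hnil]
      cases j with
      | zero => simpa using hta
      | succ j =>
        simp only [List.getD_cons_succ, List.length_nil, Nat.not_lt_zero, iff_false, not_le]
        rcases Nat.lt_or_ge j l.length with h | h
        · rw [List.getD_eq_getElem _ _ h]
          have := hle _ (l.getElem_mem h)
          omega
        · rw [List.getD_eq_default _ _ h]
          omega

lemma le_nthPart_iff {n t : ℕ} (ht : 1 ≤ t) (p : n.Partition) (j : ℕ) :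
    t ≤ nthPart p (j + 1) ↔ j < card (p.parts.filter (t ≤ ·)) := by
  rw [nthPart, Nat.add_sub_cancel,
    List.le_getD_iff_lt_length_filter ht (pairwise_sort _ _) j]
  conv_rhs => rw [← sort_eq p.parts (· ≥ ·), filter_coe, coe_card]

lemma nthPart_eq_self_iff {n d : ℕ} (hd : 1 ≤ d) (p : n.Partition) :
    nthPart p d = d ↔
      card (p.parts.filter (d < ·)) < d ∧ d ≤ card (p.parts.filter (d ≤ ·)) := by
  obtain ⟨j, rfl⟩ : ∃ j, d = j + 1 := ⟨d - 1, by omega⟩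
  have h1 := le_nthPart_iff hd p j
  have h2 := le_nthPart_iff (t := j + 2) (by omega) p j
  simp only [Nat.succ_le_iff] at h2
  omega

lemma nthPart_eq_self_of_parts_eq {n d : ℕ} (hd : 1 ≤ d) {p : n.Partition}
    {μ ν : Multiset ℕ} (hμ : ∀ x ∈ μ, 0 < x) (hμd : card μ ≤ d - 1)
    (hν : ∀ x ∈ ν, x ≤ d)
    (hp : p.parts = shiftPad d d μ + ν) : nthPart p d = d := by
  rw [nthPart_eq_self_iff hd, hp, filter_lt_shiftPad_add hμ hν, card_map]
  refine ⟨by omega, ?_⟩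
  calc d = card ((shiftPad d d μ).filter (d ≤ ·)) := by
        rw [filter_eq_self.2 fun x hx => le_of_mem_shiftPad hx, card_shiftPad (by omega)]
    _ ≤ _ := card_le_card (monotone_filter_left _ (le_add_right _ _))

lemma shiftPad_add_eq_parts_of_nthPart_eq_self {n d : ℕ} (hd : 1 ≤ d) {p : n.Partition}
    (hp : nthPart p d = d) :
    card (unshift d p.parts) ≤ d - 1 ∧
      shiftPad d d (unshift d p.parts) + (p.parts - shiftPad d d (unshift d p.parts)) =
        p.parts := by
  obtain ⟨hc, hcount⟩ := (nthPart_eq_self_iff hd p).1 hp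
  have := card_filter_le_eq_card_filter_lt_add_count d p.parts
  exact ⟨by rw [card_unshift]; omega, add_tsub_cancel_of_le (shiftPad_unshift_le (by omega))⟩

abbrev ArmLeg (d m : ℕ) : Type :=
  Σ ab : Finset.HasAntidiagonal.antidiagonal m, LengthLE (d - 1) ab.1.1 × PartsLE d ab.1.2

def ArmLeg.toPartition {d m : ℕ} (hd : 1 ≤ d) (x : ArmLeg d m) :
    {p : (m + d ^ 2).Partition // nthPart p d = d} :=
  let ⟨⟨_, hab⟩, ⟨μ, hμ⟩, ⟨ν, hν⟩⟩ := x
  ⟨⟨shiftPad d d μ.parts + ν.parts,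
    fun hx => (mem_add.1 hx).elim
      (fun hx => by have := le_of_mem_shiftPad hx; omega) ν.parts_pos,
    by
      have := Finset.HasAntidiagonal.mem_antidiagonal.1 hab
      rw [sum_add, sum_shiftPad (by omega), μ.parts_sum, ν.parts_sum, sq]
      linarith⟩,
    nthPart_eq_self_of_parts_eq hd (fun _ => μ.parts_pos) hμ hν rfl⟩

lemma ArmLeg.toPartition_bijective {d m : ℕ} (hd : 1 ≤ d) :
    Function.Bijective (ArmLeg.toPartition (m := m) hd) := by
  constructor
  · rintro ⟨⟨⟨a, b⟩, hab⟩, ⟨μ, hμ⟩, ⟨ν, hν⟩⟩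
      ⟨⟨⟨a', b'⟩, hab'⟩, ⟨μ', hμ'⟩, ⟨ν', hν'⟩⟩ h
    have hparts : shiftPad d d μ.parts + ν.parts = shiftPad d d μ'.parts + ν'.parts :=
      congrArg (·.1.parts) h
    have hμμ' : μ.parts = μ'.parts := by
      simpa [unshift_shiftPad_add (fun _ => μ.parts_pos) hν,
        unshift_shiftPad_add (fun _ => μ'.parts_pos) hν'] using congrArg (unshift d) hparts
    rw [hμμ'] at hparts
    have hνν' : ν.parts = ν'.parts := add_left_cancel hparts
    obtain rfl : a = a' := μ.parts_sum.symm.trans (hμμ' ▸ μ'.parts_sum)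
    obtain rfl : b = b' := ν.parts_sum.symm.trans (hνν' ▸ ν'.parts_sum)
    obtain rfl := Nat.Partition.ext hμμ'
    obtain rfl := Nat.Partition.ext hνν'
    rfl
  · rintro ⟨p, hp⟩
    obtain ⟨hμd, hparts⟩ := shiftPad_add_eq_parts_of_nthPart_eq_self hd hp
    have hsum := congrArg sum hparts
    rw [sum_add, sum_shiftPad (by omega), p.parts_sum] at hsum
    refine ⟨⟨⟨((unshift d p.parts).sum, (p.parts - shiftPad d d (unshift d p.parts)).sum),
      Finset.HasAntidiagonal.mem_antidiagonal.2 (by dsimp only; linarith [sq d])⟩,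
      ⟨⟨unshift d p.parts, pos_of_mem_unshift, rfl⟩, hμd⟩,
      ⟨⟨_, fun hx => p.parts_pos (mem_of_le tsub_le_self hx), rfl⟩,
        fun _ => le_of_mem_sub_shiftPad_unshift⟩⟩, Subtype.ext (Nat.Partition.ext hparts)⟩

lemma f_add_sq {d : ℕ} (hd : 1 ≤ d) (m : ℕ) :
    f (m + d ^ 2) d = ∑ ab ∈ Finset.HasAntidiagonal.antidiagonal m,
      Nat.card (LengthLE (d - 1) ab.1) * Nat.card (PartsLE d ab.2) := by
  rw [f, ← Nat.card_congr (Equiv.ofBijective _ (ArmLeg.toPartition_bijective hd)),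
    Nat.card_sigma, ← Finset.sum_coe_sort (Finset.HasAntidiagonal.antidiagonal m)]
  simp only [Nat.card_prod]

lemma f_eq_zero_of_lt_sq {n d : ℕ} (hd : 1 ≤ d) (hn : n < d ^ 2) : f n d = 0 := by
  rw [f, Nat.card_eq_zero]
  refine Or.inl ⟨fun ⟨p, hp⟩ => ?_⟩
  obtain ⟨hμd, hparts⟩ := shiftPad_add_eq_parts_of_nthPart_eq_self hd hp
  have hsum := congrArg sum hparts
  rw [sum_add, sum_shiftPad (by omega), p.parts_sum] at hsum
  rw [sq] at hn
  omega

/-- For fixed `d ≥ 1`, `∑_{n ≥ 1} f(n,d) qⁿ = q^{d²} / ((q;q)_{d-1} (q;q)_d)`,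
stated with denominators cleared:
`(q;q)_{d-1} (q;q)_d ⬝ ∑_{n ≥ 1} f(n,d) qⁿ = q^{d²}`.
(Note `f(0,d) = 0` for `d ≥ 1`, so the series below starts at `n = 1`.) -/
theorem column_generating_function (d : ℕ) (hd : 1 ≤ d) :
    qPoch (d - 1) * qPoch d * PowerSeries.mk (fun n => (f n d : ℤ)) =
      (PowerSeries.X : PowerSeries ℤ) ^ (d ^ 2) := by
  have hA := qPoch_mul_mk_eq_one (c := fun k n => Nat.card (LengthLE k n))
    card_lengthLE_zero card_lengthLE_succ (d - 1)
  have hB := qPoch_mul_mk_eq_one (c := fun k n => Nat.card (PartsLE k n))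
    card_partsLE_zero card_partsLE_succ d
  have hf : mk (fun n => (f n d : ℤ)) = X ^ (d ^ 2) *
      (mk (fun n => (Nat.card (LengthLE (d - 1) n) : ℤ)) *
        mk (fun n => (Nat.card (PartsLE d n) : ℤ))) := by
    ext n
    rw [coeff_mk, coeff_X_pow_mul']
    split_ifs with hn
    · obtain ⟨m, rfl⟩ := Nat.exists_eq_add_of_le' hn
      simp [f_add_sq hd, coeff_mul]
    · simp [f_eq_zero_of_lt_sq hd (not_le.1 hn)]
  calc qPoch (d - 1) * qPoch d * mk (fun n => (f n d : ℤ))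
      = X ^ (d ^ 2) * ((qPoch (d - 1) * mk (fun n => (Nat.card (LengthLE (d - 1) n) : ℤ))) *
          (qPoch d * mk (fun n => (Nat.card (PartsLE d n) : ℤ)))) := by rw [hf]; ring
    _ = X ^ (d ^ 2) := by rw [hA, hB, mul_one, mul_one]
end

section
/- For every n ≥ 1, the number of partitions λ of n whose Durfee square size does not occur as a part of λ equals the number of partitions μ of n for which there exists d ≥ 1 with μ_d = μ_{d+1} = d (i.e., the d-th and (d+1)-st largest parts of μ both equal d). -/
/-- The size of the Durfee square of a partition: the greatest index `i` with `λ_i ≥ i`. -/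
noncomputable def durfee {n : ℕ} (p : n.Partition) : ℕ :=
  sSup {i : ℕ | i ≤ nthPart p i}

namespace YoungDiagram

theorem card_transpose (μ : YoungDiagram) : μ.transpose.card = μ.card := by
  simp [transpose, YoungDiagram.card]

theorem getD_rowLens (μ : YoungDiagram) (i : ℕ) : μ.rowLens.getD i 0 = μ.rowLen i := by
  rcases lt_or_ge i μ.rowLens.length with h | h
  · rw [List.getD_eq_getElem _ _ h, get_rowLens]
  · rw [List.getD_eq_default _ _ h]
    rw [length_rowLens, ← not_lt, ← mem_iff_lt_colLen, mem_iff_lt_rowLen] at h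
    omega

theorem sum_rowLens (μ : YoungDiagram) : μ.rowLens.sum = μ.card := by
  have hrow : ∀ c ∈ μ.cells, c.1 ∈ Finset.range (μ.colLen 0) := fun c hc => by
    rw [Finset.mem_range, ← mem_iff_lt_colLen]
    exact μ.up_left_mem le_rfl (Nat.zero_le _) hc
  rw [YoungDiagram.card, Finset.card_eq_sum_card_fiberwise hrow, rowLens,
    ← List.sum_toFinset _ List.nodup_range, List.toFinset_range]
  exact Finset.sum_congr rfl fun i _ => μ.rowLen_eq_card

theorem mem_rowLens {μ : YoungDiagram} {a : ℕ} :
    a ∈ μ.rowLens ↔ 0 < a ∧ ∃ i, μ.rowLen i = a := by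
  simp only [rowLens, List.mem_map, List.mem_range]
  constructor
  · rintro ⟨i, hi, rfl⟩
    exact ⟨by rwa [← mem_iff_lt_colLen, mem_iff_lt_rowLen] at hi, i, rfl⟩
  · rintro ⟨ha, i, rfl⟩
    exact ⟨i, by rwa [← mem_iff_lt_colLen, mem_iff_lt_rowLen], rfl⟩

theorem colLen_eq_succ_iff {μ : YoungDiagram} {i j : ℕ} :
    μ.colLen j = i + 1 ↔ j < μ.rowLen i ∧ μ.rowLen (i + 1) ≤ j := by
  rw [← not_lt, ← mem_iff_lt_rowLen, ← mem_iff_lt_rowLen, mem_iff_lt_colLen, mem_iff_lt_colLen]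
  omega

end YoungDiagram

namespace Nat.Partition

variable {n : ℕ}

theorem sortedGE_sort_parts (p : n.Partition) : (p.parts.sort (· ≥ ·)).SortedGE :=
  List.sortedGE_iff_pairwise.mpr (Multiset.pairwise_sort _ _)

def youngDiagram (p : n.Partition) : YoungDiagram :=
  .ofRowLens _ p.sortedGE_sort_parts

theorem rowLens_youngDiagram (p : n.Partition) :
    p.youngDiagram.rowLens = p.parts.sort (· ≥ ·) :=
  YoungDiagram.rowLens_ofRowLens_eq_self fun _ hx => p.parts_pos ((Multiset.mem_sort _).mp hx)

theorem coe_rowLens_youngDiagram (p : n.Partition) :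
    (p.youngDiagram.rowLens : Multiset ℕ) = p.parts := by
  rw [rowLens_youngDiagram, Multiset.sort_eq]

theorem card_youngDiagram (p : n.Partition) : p.youngDiagram.card = n := by
  rw [← YoungDiagram.sum_rowLens, ← Multiset.sum_coe, coe_rowLens_youngDiagram, p.parts_sum]

def conj (p : n.Partition) : n.Partition where
  parts := p.youngDiagram.transpose.rowLens
  parts_pos {_} := p.youngDiagram.transpose.pos_of_mem_rowLens _
  parts_sum := by
    rw [Multiset.sum_coe, YoungDiagram.sum_rowLens, YoungDiagram.card_transpose,
      card_youngDiagram]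

theorem parts_conj (p : n.Partition) : p.conj.parts = p.youngDiagram.transpose.rowLens := rfl

theorem youngDiagram_conj (p : n.Partition) : p.conj.youngDiagram = p.youngDiagram.transpose := by
  refine YoungDiagram.equivListRowLens.injective (Subtype.ext ?_)
  simp only [YoungDiagram.equivListRowLens_apply_coe, rowLens_youngDiagram, parts_conj,
    Multiset.coe_sort]
  exact List.mergeSort_eq_self _ (YoungDiagram.rowLens_sorted _).pairwise

theorem conj_involutive : Function.Involutive (conj (n := n)) := fun p => by
  ext1
  rw [parts_conj, youngDiagram_conj, YoungDiagram.transpose_transpose, coe_rowLens_youngDiagram]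

end Nat.Partition

open Nat.Partition

section

variable {n : ℕ}

theorem nthPart_eq_rowLen (p : n.Partition) (d : ℕ) :
    nthPart p d = p.youngDiagram.rowLen (d - 1) := by
  rw [← YoungDiagram.getD_rowLens, rowLens_youngDiagram, nthPart]

theorem nthPart_conj (p : n.Partition) (d : ℕ) :
    nthPart p.conj d = p.youngDiagram.colLen (d - 1) := by
  rw [nthPart_eq_rowLen, youngDiagram_conj, YoungDiagram.rowLen_transpose]

theorem nthPart_anti (p : n.Partition) {d e : ℕ} (h : d ≤ e) : nthPart p e ≤ nthPart p d := by
  rw [nthPart_eq_rowLen, nthPart_eq_rowLen]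
  exact p.youngDiagram.rowLen_anti _ _ (Nat.sub_le_sub_right h 1)

theorem nthPart_one_pos (p : n.Partition) (hn : 1 ≤ n) : 0 < nthPart p 1 := by
  rw [nthPart_eq_rowLen, ← YoungDiagram.mem_iff_lt_rowLen]
  have hcard : 0 < p.youngDiagram.card := by rwa [card_youngDiagram]
  obtain ⟨c, hc⟩ := Finset.card_pos.mp hcard
  exact p.youngDiagram.up_left_mem (Nat.zero_le _) (Nat.zero_le _) hc

theorem mem_parts_iff_exists_nthPart_eq (p : n.Partition) {a : ℕ} (ha : 0 < a) :
    a ∈ p.parts ↔ ∃ i, nthPart p i = a := by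
  rw [← coe_rowLens_youngDiagram, Multiset.mem_coe, YoungDiagram.mem_rowLens]
  simp only [ha, true_and, nthPart_eq_rowLen]
  exact ⟨fun ⟨i, hi⟩ => ⟨i + 1, hi⟩, fun ⟨i, hi⟩ => ⟨i - 1, hi⟩⟩

theorem durfee_eq_iff (p : n.Partition) (d : ℕ) :
    durfee p = d ↔ d ≤ nthPart p d ∧ nthPart p (d + 1) ≤ d := by
  have hbdd : BddAbove {i | i ≤ nthPart p i} :=
    ⟨nthPart p 0, fun i hi => hi.trans (nthPart_anti p (Nat.zero_le i))⟩
  constructor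
  · rintro rfl
    have hsucc : ¬durfee p + 1 ≤ nthPart p (durfee p + 1) :=
      notMem_of_csSup_lt (s := {i | i ≤ nthPart p i}) (Nat.lt_succ_self _) hbdd
    exact ⟨Nat.sSup_mem (s := {i | i ≤ nthPart p i}) ⟨0, Nat.zero_le _⟩ hbdd, by omega⟩
  · rintro ⟨hd, hsucc⟩
    refine IsGreatest.csSup_eq ⟨hd, fun i hi => ?_⟩
    by_contra! hlt
    have : i ≤ nthPart p i := hi
    have := nthPart_anti p (show d + 1 ≤ i by omega)
    omega

theorem durfee_notMem_parts_iff (p : n.Partition) (hn : 1 ≤ n) :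
    durfee p ∉ p.parts ↔ ∃ d, 1 ≤ d ∧ d < nthPart p d ∧ nthPart p (d + 1) < d := by
  constructor
  · intro h
    obtain ⟨hD, hsucc⟩ := (durfee_eq_iff p (durfee p)).mp rfl
    have hpos : 0 < durfee p := by
      by_contra! h0
      have := nthPart_one_pos p hn
      simp only [nonpos_iff_eq_zero.mp h0, zero_add] at hsucc
      omega
    rw [mem_parts_iff_exists_nthPart_eq p hpos, not_exists] at h
    exact ⟨durfee p, hpos, by have := h (durfee p); omega, by have := h (durfee p + 1); omega⟩
  · rintro ⟨d, hd, hlt, hsucc⟩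
    rw [(durfee_eq_iff p d).mpr ⟨hlt.le, hsucc.le⟩, mem_parts_iff_exists_nthPart_eq p hd,
      not_exists]
    intro i hi
    rcases le_or_gt i d with hle | hgt
    · have := nthPart_anti p hle
      omega
    · have := nthPart_anti p (show d + 1 ≤ i by omega)
      omega

theorem nthPart_conj_eq_and_succ_eq_iff (p : n.Partition) {d : ℕ} (hd : 1 ≤ d) :
    nthPart p.conj d = d ∧ nthPart p.conj (d + 1) = d ↔
      d < nthPart p d ∧ nthPart p (d + 1) < d := by
  obtain ⟨i, rfl⟩ : ∃ i, d = i + 1 := ⟨d - 1, by omega⟩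
  rw [nthPart_conj, nthPart_conj, nthPart_eq_rowLen, nthPart_eq_rowLen]
  simp only [Nat.add_sub_cancel, YoungDiagram.colLen_eq_succ_iff]
  omega

end

/-- For `n ≥ 1`, the number of partitions of `n` whose Durfee square size does not
occur as a part equals the number of partitions `μ` of `n` for which there exists
`d ≥ 1` with `μ_d = μ_{d+1} = d`. -/
theorem durfee_not_part_eq_double_fixed (n : ℕ) (hn : 1 ≤ n) :
    Nat.card {l : n.Partition // durfee l ∉ l.parts} =
      Nat.card {m : n.Partition // ∃ d, 1 ≤ d ∧ nthPart m d = d ∧ nthPart m (d + 1) = d} := by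
  refine Nat.card_congr (Equiv.subtypeEquiv (conj_involutive.toPerm _) fun l => ?_)
  rw [durfee_notMem_parts_iff l hn]
  exact exists_congr fun d => and_congr_right fun hd => (nthPart_conj_eq_and_succ_eq_iff l hd).symm
end

section
/- For every n ≥ 1, the number of partitions μ of n+1 for which there exists d ≥ 1 with μ_d = μ_{d+1} = d equals the sum over all d ≥ 1 of f(n+1-d, d). -/
theorem List.le_getD_iff_lt_countP {α : Type*} [LinearOrder α] {l : List α}
    (hl : l.Pairwise (· ≥ ·)) {v b : α} (hb : b < v) (i : ℕ) :
    v ≤ l.getD i b ↔ i < l.countP (v ≤ ·) := by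
  induction l generalizing i with
  | nil => simp [hb.not_ge]
  | cons a t ih =>
    obtain ⟨ha, ht⟩ := List.pairwise_cons.mp hl
    have hzero (hva : ¬v ≤ a) : t.countP (v ≤ ·) = 0 :=
      List.countP_eq_zero.mpr fun x hx hvx =>
        hva ((of_decide_eq_true hvx).trans (ha x hx))
    cases i with
    | zero => by_cases hva : v ≤ a <;> simp [hva, hzero]
    | succ i =>
      rw [List.getD_cons_succ, ih ht, List.countP_cons]
      by_cases hva : v ≤ a <;> simp [hva, hzero]

theorem Multiset.antitone_countP_le {α : Type*} [Preorder α] [DecidableLE α] (s : Multiset α) :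
    Antitone fun v => s.countP (v ≤ ·) := fun _ _ huv => by
  simp only [Multiset.countP_eq_card_filter]
  exact Multiset.card_le_card (s.monotone_filter_right fun _ h => huv.trans h)

section nthPart

variable {N : ℕ} (μ : N.Partition)

theorem le_nthPart_iff_s17 {i v : ℕ} (hi : 1 ≤ i) (hv : 0 < v) :
    v ≤ nthPart μ i ↔ i ≤ μ.parts.countP (v ≤ ·) := by
  have h : v ≤ nthPart μ i ↔ i - 1 < μ.parts.countP (v ≤ ·) := by
    have h := List.le_getD_iff_lt_countP (Multiset.pairwise_sort μ.parts (· ≥ ·)) hv (i - 1)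
    rwa [← Multiset.coe_countP, Multiset.sort_eq] at h
  omega

theorem nthPart_eq_iff {i v : ℕ} (hi : 1 ≤ i) (hv : 0 < v) :
    nthPart μ i = v ↔ i ≤ μ.parts.countP (v ≤ ·) ∧ μ.parts.countP (v + 1 ≤ ·) < i := by
  have hv₁ := le_nthPart_iff_s17 μ hi hv
  have hv₂ := le_nthPart_iff_s17 μ hi (by omega : 0 < v + 1)
  omega

theorem nthPart_mem {i : ℕ} (h : nthPart μ i ≠ 0) : nthPart μ i ∈ μ.parts := by
  unfold nthPart at h ⊢
  rw [List.getD_eq_getElem?_getD] at h ⊢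
  cases hget : (μ.parts.sort (· ≥ ·))[i - 1]? with
  | none => simp [hget] at h
  | some a => simpa using (Multiset.mem_sort _).mp (List.mem_of_getElem? hget)

theorem mem_parts_of_nthPart_eq_self {d : ℕ} (hd : 1 ≤ d) (h : nthPart μ d = d) :
    d ∈ μ.parts :=
  h ▸ nthPart_mem μ (by omega)

theorem le_of_nthPart_eq_self {d : ℕ} (hd : 1 ≤ d) (h : nthPart μ d = d) : d ≤ N :=
  μ.parts_sum ▸ Multiset.le_sum_of_mem (mem_parts_of_nthPart_eq_self μ hd h)

theorem double_fixed_iff {d : ℕ} (hd : 1 ≤ d) :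
    (nthPart μ d = d ∧ nthPart μ (d + 1) = d) ↔
      d + 1 ≤ μ.parts.countP (d ≤ ·) ∧ μ.parts.countP (d + 1 ≤ ·) < d := by
  rw [nthPart_eq_iff μ hd hd, nthPart_eq_iff μ (by omega) hd]
  omega

theorem eq_of_double_fixed {d e : ℕ} (hd : 1 ≤ d) (he : 1 ≤ e)
    (hμd : nthPart μ d = d ∧ nthPart μ (d + 1) = d)
    (hμe : nthPart μ e = e ∧ nthPart μ (e + 1) = e) : d = e := by
  rw [double_fixed_iff μ hd] at hμd
  rw [double_fixed_iff μ he] at hμe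
  rcases lt_trichotomy d e with hde | rfl | hed
  · have : μ.parts.countP (e ≤ ·) ≤ μ.parts.countP (d + 1 ≤ ·) :=
      μ.parts.antitone_countP_le (by omega)
    omega
  · rfl
  · have : μ.parts.countP (d ≤ ·) ≤ μ.parts.countP (e + 1 ≤ ·) :=
      μ.parts.antitone_countP_le (by omega)
    omega

end nthPart

namespace Nat.Partition

variable {m N d : ℕ}

def addPart (p : m.Partition) (hd : 0 < d) (h : m + d = N) : N.Partition where
  parts := d ::ₘ p.parts
  parts_pos hi := by
    rcases Multiset.mem_cons.mp hi with rfl | hi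
    exacts [hd, p.parts_pos hi]
  parts_sum := by rw [Multiset.sum_cons, p.parts_sum]; omega

def erasePart (μ : N.Partition) (hd : d ∈ μ.parts) (h : m + d = N) : m.Partition where
  parts := μ.parts.erase d
  parts_pos hi := μ.parts_pos (Multiset.mem_of_mem_erase hi)
  parts_sum := by
    have hsum := μ.parts_sum
    rw [← Multiset.cons_erase hd, Multiset.sum_cons] at hsum
    omega

theorem addPart_erasePart (μ : N.Partition) (hmem : d ∈ μ.parts) (hd : 0 < d)
    (h : m + d = N) : (μ.erasePart hmem h).addPart hd h = μ :=
  Nat.Partition.ext (Multiset.cons_erase hmem)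

theorem erasePart_addPart (p : m.Partition) (hd : 0 < d) (h : m + d = N) :
    (p.addPart hd h).erasePart (Multiset.mem_cons_self d p.parts) h = p :=
  Nat.Partition.ext (Multiset.erase_cons_head d p.parts)

theorem double_fixed_addPart_iff (p : m.Partition) (hd : 0 < d) (h : m + d = N) :
    (nthPart (p.addPart hd h) d = d ∧ nthPart (p.addPart hd h) (d + 1) = d) ↔
      nthPart p d = d := by
  rw [double_fixed_iff _ hd, nthPart_eq_iff p hd hd]
  simp only [addPart, Multiset.countP_cons, le_refl, if_true, Nat.not_succ_le_self, if_false]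
  omega

def doubleFixedEquiv (hd : 0 < d) (h : m + d = N) :
    {μ : N.Partition // nthPart μ d = d ∧ nthPart μ (d + 1) = d} ≃
      {p : m.Partition // nthPart p d = d} where
  toFun μ :=
    ⟨μ.1.erasePart (mem_parts_of_nthPart_eq_self μ.1 hd μ.2.1) h,
      (double_fixed_addPart_iff _ hd h).mp (by rw [addPart_erasePart]; exact μ.2)⟩
  invFun p := ⟨p.1.addPart hd h, (double_fixed_addPart_iff _ hd h).mpr p.2⟩
  left_inv μ :=
    Subtype.ext (addPart_erasePart _ (mem_parts_of_nthPart_eq_self μ.1 hd μ.2.1) hd h)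
  right_inv p := Subtype.ext (erasePart_addPart _ hd h)

end Nat.Partition

theorem card_double_fixed_eq_f {N d : ℕ} (hd : 1 ≤ d) (hdN : d ≤ N) :
    Nat.card {μ : N.Partition // nthPart μ d = d ∧ nthPart μ (d + 1) = d} = f (N - d) d :=
  Nat.card_congr (Nat.Partition.doubleFixedEquiv hd (by omega))

theorem Nat.card_exists_mem_eq_sum {α ι : Type*} [Finite α] (s : Finset ι) (P : ι → α → Prop)
    (hP : ∀ x, ∀ i ∈ s, ∀ j ∈ s, P i x → P j x → i = j) :
    Nat.card {x // ∃ i ∈ s, P i x} = ∑ i ∈ s, Nat.card {x // P i x} := by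
  classical
  have := Fintype.ofFinite α
  simp only [Nat.card_eq_fintype_card, Fintype.card_subtype]
  rw [← Finset.card_biUnion]
  · congr 1
    ext x
    simp
  · intro i hi j hj hij
    simp only [Function.onFun, Finset.disjoint_left, Finset.mem_filter, Finset.mem_univ,
      true_and]
    exact fun x hPi hPj => hij (hP x i hi j hj hPi hPj)

theorem double_fixed_eq_diagonal_sum_general (n : ℕ) :
    Nat.card {m : (n + 1).Partition //
        ∃ d, 1 ≤ d ∧ nthPart m d = d ∧ nthPart m (d + 1) = d} =
      ∑ d ∈ Finset.Icc 1 (n + 1), f (n + 1 - d) d := by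
  have hbounded (m : (n + 1).Partition) :
      (∃ d, 1 ≤ d ∧ nthPart m d = d ∧ nthPart m (d + 1) = d) ↔
        ∃ d ∈ Finset.Icc 1 (n + 1), nthPart m d = d ∧ nthPart m (d + 1) = d := by
    simp only [Finset.mem_Icc]
    exact exists_congr fun d =>
      ⟨fun ⟨hd, h⟩ => ⟨⟨hd, le_of_nthPart_eq_self m hd h.1⟩, h⟩, fun ⟨hd, h⟩ => ⟨hd.1, h⟩⟩
  rw [Nat.card_congr (Equiv.subtypeEquivRight hbounded), Nat.card_exists_mem_eq_sum]
  · exact Finset.sum_congr rfl fun d hd =>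
      card_double_fixed_eq_f (Finset.mem_Icc.mp hd).1 (Finset.mem_Icc.mp hd).2
  · exact fun m d hd e he =>
      eq_of_double_fixed m (Finset.mem_Icc.mp hd).1 (Finset.mem_Icc.mp he).1

/-- For `n ≥ 1`, the number of partitions `μ` of `n+1` with `μ_d = μ_{d+1} = d` for
some `d ≥ 1` equals `∑_{d ≥ 1} f(n+1-d, d)` (terms with `d > n+1` vanish, so the
sum is truncated at `d = n+1`). -/
theorem double_fixed_eq_diagonal_sum (n : ℕ) (hn : 1 ≤ n) :
    Nat.card {m : (n + 1).Partition //
        ∃ d, 1 ≤ d ∧ nthPart m d = d ∧ nthPart m (d + 1) = d} =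
      ∑ d ∈ Finset.Icc 1 (n + 1), f (n + 1 - d) d :=
  double_fixed_eq_diagonal_sum_general n
end
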